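/- Let η : (0,1) → ℝ and suppose a qubit channel N has Bloch representation (t, T) with ‖T‖ < 1 (strictly contractive). Then for every binary POVM {M, 1−M} with M = N†(|φ⟩⟨φ|) for a pure state |φ⟩, the eigenvalues m₁, m₂ of M satisfy |m₁ − m₂| ≤ ‖T‖. Consequently 1 − (√(m₁m₂) + √((1−m₁)(1−m₂)))² ≤ ‖T‖ < 1. -/

import Mathlib

open Matrix Complex
open scoped ComplexOrder

noncomputable section

/-- The Pauli matrices X, Y, Z. -/
def pauli : Fin 3 → Matrix (Fin 2) (Fin 2) ℂ
  | 0 => !![0, 1; 1, 0]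
  | 1 => !![0, -I; I, 0]
  | 2 => !![1, 0; 0, -1]

/-- The qubit state (or Hermitian matrix) with Bloch vector `w`: `(1 + w·σ)/2`. -/
def blochState (w : Fin 3 → ℝ) : Matrix (Fin 2) (Fin 2) ℂ :=
  (1 / 2 : ℂ) • (1 + ∑ i, (w i : ℂ) • pauli i)

/-- The Choi matrix of a linear map on 2×2 matrices. -/
def choi (E : Matrix (Fin 2) (Fin 2) ℂ →ₗ[ℂ] Matrix (Fin 2) (Fin 2) ℂ) :
    Matrix (Fin 2 × Fin 2) (Fin 2 × Fin 2) ℂ :=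
  Matrix.of fun p q => E (Matrix.single p.2 q.2 1) p.1 q.1

/-- The operator norm of a real 3×3 matrix, acting on Euclidean space. -/
def opNorm3 (T : Matrix (Fin 3) (Fin 3) ℝ) : ℝ :=
  ‖Matrix.toEuclideanCLM (𝕜 := ℝ) T‖

/-!
The pure state `|φ⟩⟨φ|` is `blochState w` with `‖w‖ = 1`, the norm being forced by
`det |φ⟩⟨φ| = 0`. Expanding `N†(blochState w)` in the Pauli basis and moving each trace to `N`
by duality gives `N†(blochState w) = ((1 + t·w) 1 + (Tᵀw)·σ)/2`. For any matrix `(c 1 + v·σ)/2`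
the squared eigenvalue gap `tr² − 4 det` is `∑ vᵢ²`, so `|m₁ − m₂| = ‖Tᵀw‖ ≤ ‖T‖`. The bound on
`1 − (√(m₁m₂) + √((1−m₁)(1−m₂)))²` is then an elementary inequality valid for all real `m₁, m₂`.
-/

open ComplexConjugate

/-- The Bhattacharyya coefficient of the Bernoulli distributions `(p, 1 - p)` and `(q, 1 - q)`. -/
def bhattacharyya (p q : ℝ) : ℝ := √(p * q) + √((1 - p) * (1 - q))

lemma one_sub_sq_bhattacharyya_le_abs_sub (p q : ℝ) : 1 - bhattacharyya p q ^ 2 ≤ |p - q| := by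
  wlog hqp : q ≤ p generalizing p q
  · simpa [bhattacharyya, abs_sub_comm, mul_comm] using this q p (le_of_not_ge hqp)
  rw [abs_of_nonneg (sub_nonneg.2 hqp), bhattacharyya]
  set a := √(p * q)
  set b := √((1 - p) * (1 - q))
  have ha : p * q ≤ a ^ 2 := Real.sq_sqrt' (x := p * q) ▸ le_max_left _ _
  have hb : (1 - p) * (1 - q) ≤ b ^ 2 := Real.sq_sqrt' (x := (1 - p) * (1 - q)) ▸ le_max_left _ _
  have hab : 0 ≤ a * b := mul_nonneg (Real.sqrt_nonneg _) (Real.sqrt_nonneg _)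
  -- `1 - (p - q) = p q + (1 - p) (1 - q) + 2 q (1 - p)`, so only `q (1 - p) > 0` needs `a b`.
  rcases le_or_gt q 0 with hq | hq <;> rcases le_or_gt 1 p with hp | hp
  · nlinarith
  · nlinarith
  · nlinarith
  · have hcross : q * (1 - p) ≤ a * b := by
      rw [← Real.sqrt_mul (by nlinarith), show p * q * ((1 - p) * (1 - q))
        = (q * (1 - p)) * (p * (1 - q)) by ring]
      refine Real.le_sqrt_of_sq_le ?_
      nlinarith [mul_le_mul_of_nonneg_left (show q * (1 - p) ≤ p * (1 - q) by nlinarith)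
        (show 0 ≤ q * (1 - p) by nlinarith)]
    nlinarith

lemma Matrix.sub_sq_eq_trace_sq_sub_four_mul_det {K : Type*} [Field K]
    {X : Matrix (Fin 2) (Fin 2) K} {μ₁ μ₂ : K} (h : X.charpoly.roots = {μ₁, μ₂}) :
    (μ₁ - μ₂) ^ 2 = X.trace ^ 2 - 4 * X.det := by
  have hsplit : X.charpoly.Splits := Polynomial.splits_iff_card_roots.2 <| by
    rw [h, charpoly_natDegree_eq_dim, Fintype.card_fin]; rfl
  rw [trace_eq_sum_roots_charpoly_of_splits hsplit, det_eq_prod_roots_charpoly_of_splits hsplit, h]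
  simp only [Multiset.insert_eq_cons, Multiset.sum_cons, Multiset.prod_cons,
    Multiset.sum_singleton, Multiset.prod_singleton]
  ring

lemma pauli_expansion (X : Matrix (Fin 2) (Fin 2) ℂ) :
    X = (1 / 2 : ℂ) • (X.trace • 1 + ∑ i, (X * pauli i).trace • pauli i) := by
  ext i j
  fin_cases i <;> fin_cases j <;>
    simp [pauli, Fin.sum_univ_three, trace_fin_two, mul_apply, add_mul, mul_assoc] <;> ring

lemma trace_pauli (i : Fin 3) : (pauli i).trace = 0 := by
  fin_cases i <;> simp [pauli, trace_fin_two]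

lemma trace_pauli_mul_pauli (i j : Fin 3) : (pauli i * pauli j).trace = if i = j then 2 else 0 := by
  fin_cases i <;> fin_cases j <;> simp [pauli, trace_fin_two] <;> norm_num

lemma trace_smul_one_add_sum_mul_pauli (c : ℂ) (v : Fin 3 → ℂ) (j : Fin 3) :
    ((1 / 2 : ℂ) • (c • 1 + ∑ i, v i • pauli i) * pauli j).trace = v j := by
  simp [Matrix.add_mul, Finset.sum_mul, trace_sum, trace_pauli, trace_pauli_mul_pauli, mul_comm]

lemma trace_sq_sub_four_mul_det_eq_sum_sq {X : Matrix (Fin 2) (Fin 2) ℂ} {c : ℂ} {v : Fin 3 → ℂ}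
    (hX : X = (1 / 2 : ℂ) • (c • 1 + ∑ i, v i • pauli i)) :
    X.trace ^ 2 - 4 * X.det = ∑ i, v i ^ 2 := by
  simp [hX, pauli, Fin.sum_univ_three, trace_fin_two, det_fin_two]
  linear_combination -v 1 ^ 2 * I_sq

lemma trace_blochState (w : Fin 3 → ℝ) : (blochState w).trace = 1 := by
  simp [blochState, trace_sum, trace_pauli]

lemma trace_blochState_mul_pauli (w : Fin 3 → ℝ) (j : Fin 3) :
    (blochState w * pauli j).trace = w j := by
  simpa [blochState] using trace_smul_one_add_sum_mul_pauli 1 (fun i => (w i : ℂ)) j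

lemma blochState_sub (w w' : Fin 3 → ℝ) :
    blochState w - blochState w' = (1 / 2 : ℂ) • ∑ i, ((w i - w' i : ℝ) : ℂ) • pauli i := by
  simp [blochState, ← smul_sub, sub_smul]

/-- The Bloch vector `(⟨φ|σᵢ|φ⟩)ᵢ` of `|φ⟩`. -/
def blochVector (φ : Fin 2 → ℂ) : Fin 3 → ℝ :=
  ![2 * (φ 0 * conj (φ 1)).re, -2 * (φ 0 * conj (φ 1)).im, normSq (φ 0) - normSq (φ 1)]

lemma blochState_blochVector {φ : Fin 2 → ℂ} (hφ : ∑ i, normSq (φ i) = 1) :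
    blochState (blochVector φ) = of fun i j => φ i * conj (φ j) := by
  simp only [Fin.sum_univ_two, normSq_apply] at hφ
  ext i j
  fin_cases i <;> fin_cases j <;>
    apply Complex.ext <;>
    simp [blochState, blochVector, pauli, Fin.sum_univ_three, normSq_apply] <;> linarith

lemma sum_sq_blochVector {φ : Fin 2 → ℂ} (hφ : ∑ i, normSq (φ i) = 1) :
    ∑ i, blochVector φ i ^ 2 = 1 := by
  have htrace : (of fun i j => φ i * conj (φ j)).trace = 1 := by
    rw [Fin.sum_univ_two] at hφ
    simp only [trace_fin_two, of_apply, mul_conj]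
    exact_mod_cast hφ
  have hdet : (of fun i j => φ i * conj (φ j)).det = 0 := by
    rw [det_fin_two]; simp only [of_apply]; ring
  have h := trace_sq_sub_four_mul_det_eq_sum_sq (c := 1) (v := fun i => (blochVector φ i : ℂ))
    (by rw [one_smul, ← blochState, blochState_blochVector hφ])
  rw [htrace, hdet] at h
  norm_num at h
  exact_mod_cast h.symm

lemma opNorm3_transpose (T : Matrix (Fin 3) (Fin 3) ℝ) : opNorm3 Tᵀ = opNorm3 T := by
  rw [opNorm3, opNorm3, show Tᵀ = star T from rfl, map_star, ContinuousLinearMap.star_eq_adjoint,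
    LinearIsometryEquiv.norm_map]

lemma sum_sq_mulVec_le (T : Matrix (Fin 3) (Fin 3) ℝ) (w : Fin 3 → ℝ) :
    ∑ i, (T *ᵥ w) i ^ 2 ≤ opNorm3 T ^ 2 * ∑ i, w i ^ 2 := by
  have h := (Matrix.toEuclideanCLM (𝕜 := ℝ) T).le_opNorm (WithLp.toLp 2 w)
  have h2 := pow_le_pow_left₀ (norm_nonneg _) h 2
  rw [mul_pow, EuclideanSpace.norm_sq_eq, EuclideanSpace.norm_sq_eq] at h2
  simpa [opNorm3] using h2

section BlochRepresentation

variable {N : Matrix (Fin 2) (Fin 2) ℂ →ₗ[ℂ] Matrix (Fin 2) (Fin 2) ℂ}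
  {t : Fin 3 → ℝ} {T : Matrix (Fin 3) (Fin 3) ℝ}

lemma map_one_of_bloch
    (hBloch : ∀ w, N (blochState w) = blochState fun i => t i + T.mulVec w i) :
    N 1 = 1 + ∑ i, (t i : ℂ) • pauli i := by
  have h := hBloch 0
  simp only [blochState, Pi.zero_apply, Complex.ofReal_zero, zero_smul, Finset.sum_const_zero,
    add_zero, mulVec_zero, map_smul] at h
  exact smul_right_injective _ (by norm_num) h

lemma map_pauli_of_bloch
    (hBloch : ∀ w, N (blochState w) = blochState fun i => t i + T.mulVec w i) (j : Fin 3) :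
    N (pauli j) = ∑ i, (T i j : ℂ) • pauli i := by
  have hpauli : pauli j = (2 : ℂ) • (blochState (Pi.single j 1) - blochState 0) := by
    rw [blochState_sub, smul_smul]
    simp [Pi.single_apply]
  rw [hpauli, map_smul, map_sub, hBloch, hBloch, blochState_sub, smul_smul]
  simp [mulVec_single]

lemma dual_blochState (hBloch : ∀ w, N (blochState w) = blochState fun i => t i + T.mulVec w i)
    {Nd : Matrix (Fin 2) (Fin 2) ℂ →ₗ[ℂ] Matrix (Fin 2) (Fin 2) ℂ}
    (hdual : ∀ A B, (Nd A * B).trace = (A * N B).trace) (w : Fin 3 → ℝ) :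
    Nd (blochState w) =
      (1 / 2 : ℂ) • (((1 + t ⬝ᵥ w : ℝ) : ℂ) • 1 + ∑ i, ((Tᵀ *ᵥ w) i : ℂ) • pauli i) := by
  rw [pauli_expansion (Nd _)]
  congr 3
  · rw [← mul_one (Nd _), hdual, map_one_of_bloch hBloch]
    simp [Matrix.mul_add, Matrix.mul_sum, trace_sum, trace_blochState, trace_blochState_mul_pauli,
      dotProduct]
  · ext1 j
    rw [hdual, map_pauli_of_bloch hBloch]
    simp [Matrix.mul_sum, trace_sum, trace_blochState_mul_pauli, mulVec, dotProduct]

end BlochRepresentation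

theorem contraction_coefficient_bound_general
    (N Nd : Matrix (Fin 2) (Fin 2) ℂ →ₗ[ℂ] Matrix (Fin 2) (Fin 2) ℂ)
    (hdual : ∀ A B, (Nd A * B).trace = (A * N B).trace)
    (t : Fin 3 → ℝ) (T : Matrix (Fin 3) (Fin 3) ℝ)
    (hBloch : ∀ w : Fin 3 → ℝ,
      N (blochState w) = blochState fun i => t i + T.mulVec w i)
    (hT : opNorm3 T < 1)
    (φ : Fin 2 → ℂ) (hφ : ∑ i, Complex.normSq (φ i) = 1)
    (m₁ m₂ : ℝ)
    (hm : (Nd (Matrix.of fun i j => φ i * starRingEnd ℂ (φ j))).charpoly.roots =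
      ({(m₁ : ℂ), (m₂ : ℂ)} : Multiset ℂ)) :
    |m₁ - m₂| ≤ opNorm3 T ∧
      1 - (Real.sqrt (m₁ * m₂) + Real.sqrt ((1 - m₁) * (1 - m₂))) ^ 2 ≤ opNorm3 T ∧
      opNorm3 T < 1 := by
  set w := blochVector φ
  rw [← blochState_blochVector hφ] at hm
  have hgap : (m₁ - m₂) ^ 2 = ∑ i, (Tᵀ *ᵥ w) i ^ 2 := by
    have h := sub_sq_eq_trace_sq_sub_four_mul_det hm
    rw [trace_sq_sub_four_mul_det_eq_sum_sq (dual_blochState hBloch hdual w)] at h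
    exact_mod_cast h
  have habs : |m₁ - m₂| ≤ opNorm3 T := by
    refine abs_le_of_sq_le_sq ?_ (norm_nonneg _)
    calc (m₁ - m₂) ^ 2 = ∑ i, (Tᵀ *ᵥ w) i ^ 2 := hgap
      _ ≤ opNorm3 Tᵀ ^ 2 * ∑ i, w i ^ 2 := sum_sq_mulVec_le Tᵀ w
      _ = opNorm3 T ^ 2 := by rw [opNorm3_transpose, sum_sq_blochVector hφ, mul_one]
  exact ⟨habs, (one_sub_sq_bhattacharyya_le_abs_sub m₁ m₂).trans habs, hT⟩

/-- If a strictly contractive qubit channel `N` (Bloch representation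
`(t, T)`, `‖T‖ < 1`) has dual map `N†`, then for any pure state `|φ⟩` the eigenvalues
`m₁, m₂` of `M = N†(|φ⟩⟨φ|)` satisfy `|m₁ − m₂| ≤ ‖T‖`, and consequently
`1 − (√(m₁m₂) + √((1−m₁)(1−m₂)))² ≤ ‖T‖ < 1`. -/
theorem contraction_coefficient_bound
    (N Nd : Matrix (Fin 2) (Fin 2) ℂ →ₗ[ℂ] Matrix (Fin 2) (Fin 2) ℂ)
    (hTP : ∀ A, (N A).trace = A.trace)
    (hCP : (choi N).PosSemidef)
    (hdual : ∀ A B, (Nd A * B).trace = (A * N B).trace)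
    (t : Fin 3 → ℝ) (T : Matrix (Fin 3) (Fin 3) ℝ)
    (hBloch : ∀ w : Fin 3 → ℝ,
      N (blochState w) = blochState fun i => t i + T.mulVec w i)
    (hT : opNorm3 T < 1)
    (φ : Fin 2 → ℂ) (hφ : ∑ i, Complex.normSq (φ i) = 1)
    (m₁ m₂ : ℝ)
    (hm : (Nd (Matrix.of fun i j => φ i * starRingEnd ℂ (φ j))).charpoly.roots =
      ({(m₁ : ℂ), (m₂ : ℂ)} : Multiset ℂ)) :
    |m₁ - m₂| ≤ opNorm3 T ∧
      1 - (Real.sqrt (m₁ * m₂) + Real.sqrt ((1 - m₁) * (1 - m₂))) ^ 2 ≤ opNorm3 T ∧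
      opNorm3 T < 1 :=
  contraction_coefficient_bound_general N Nd hdual t T hBloch hT φ hφ m₁ m₂ hm

end
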